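/- Under the standard smooth setup (ξ C², ξ′>0, A″>0, with r and curves Γ^t defined as usual), if 0 < t₁ < t₂, then the curve Γ^{t₁} lies below the curve Γ^{t₂} in the following sense: for each τ > 0, the point Γ^{t₂}(τ) = (t₁/t₂)·Γ^{t₁}(τ) lies on the segment joining Γ^{t₁}(τ) to the origin, and this segment lies above the curve Γ^{t₁} (since Γ₁^{t₁} is increasing and the slope Γ₂^{t₁}/Γ₁^{t₁} is increasing along the curve). -/

import Mathlib

/-!
With `A(s) = s²ξ(s)²` one has `s·(r² + ξ²) = A′(s)` and `s·r = √(sA′ − A)`, so `t·Γ^t` is the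
curve `s ↦ (√(sA′ − A), A′)`. Its first coordinate increases since `(sA′ − A)′ = sA″ > 0`, and its
slope `A′/√(sA′ − A)` increases since `(A′²/(sA′ − A))′ = A′A″(sA′ − 2A)/(sA′ − A)²` and
`sA′ − 2A = 2s³ξξ′ > 0`. For such a curve the chord from the origin to any of its points lies
above it, and `Γ^{t₂}(τ) = (t₁/t₂)·Γ^{t₁}(τ)` lies on the chord to `Γ^{t₁}(τ)`.
-/

open Set

theorem le_mul_of_strictMonoOn_of_monotoneOn_div {x y : ℝ → ℝ} {S : Set ℝ}
    (hx : StrictMonoOn x S) (hx0 : ∀ s ∈ S, 0 < x s)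
    (hslope : MonotoneOn (fun s => y s / x s) S) {τ σ θ : ℝ} (hτ : τ ∈ S) (hσ : σ ∈ S)
    (hθ : θ ≤ 1) (h : θ * x τ = x σ) : y σ ≤ θ * y τ := by
  have hxσ := hx0 σ hσ
  have hxτ := hx0 τ hτ
  have hστ : σ ≤ τ := by
    by_contra! hτσ
    nlinarith [hx hτ hσ hτσ]
  calc y σ = x σ * (y σ / x σ) := by field_simp
    _ ≤ x σ * (y τ / x τ) := mul_le_mul_of_nonneg_left (hslope hσ hτ hστ) hxσ.le
    _ = θ * y τ := by rw [← h]; field_simp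

section Legendre

variable {A G A'' : ℝ → ℝ}

theorem hasDerivAt_mul_deriv_sub {s : ℝ} (hA : HasDerivAt A (G s) s)
    (hG : HasDerivAt G (A'' s) s) : HasDerivAt (fun s => s * G s - A s) (s * A'' s) s :=
  (((hasDerivAt_id' s).fun_mul hG).fun_sub hA).congr_deriv (by ring)

theorem strictMonoOn_mul_deriv_sub (hA : ∀ s > 0, HasDerivAt A (G s) s)
    (hG : ∀ s > 0, HasDerivAt G (A'' s) s) (hA'' : ∀ s > 0, 0 < A'' s) :
    StrictMonoOn (fun s => s * G s - A s) (Ioi 0) := by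
  have hderiv s (hs : 0 < s) := hasDerivAt_mul_deriv_sub (hA s hs) (hG s hs)
  refine strictMonoOn_of_deriv_pos (convex_Ioi 0)
    (fun s hs => (hderiv s hs).continuousAt.continuousWithinAt) fun s hs => ?_
  rw [interior_Ioi] at hs
  rw [(hderiv s hs).deriv]
  exact mul_pos hs (hA'' s hs)

theorem strictMonoOn_sq_div_mul_deriv_sub (hA : ∀ s > 0, HasDerivAt A (G s) s)
    (hG : ∀ s > 0, HasDerivAt G (A'' s) s) (hA'' : ∀ s > 0, 0 < A'' s)
    (hA0 : ∀ s > 0, 0 ≤ A s) (h2A : ∀ s > 0, 2 * A s < s * G s) :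
    StrictMonoOn (fun s => G s ^ 2 / (s * G s - A s)) (Ioi 0) := by
  have hF s (hs : 0 < s) : 0 < s * G s - A s := by linarith [hA0 s hs, h2A s hs]
  have hG0 s (hs : 0 < s) : 0 < G s :=
    pos_of_mul_pos_right (by linarith [hA0 s hs, h2A s hs]) hs.le
  have hderiv s (hs : 0 < s) : HasDerivAt (fun s => G s ^ 2 / (s * G s - A s))
      (G s * A'' s * (s * G s - 2 * A s) / (s * G s - A s) ^ 2) s := by
    refine (((hG s hs).fun_pow 2).fun_div (hasDerivAt_mul_deriv_sub (hA s hs) (hG s hs))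
      (hF s hs).ne').congr_deriv ?_
    field_simp
    ring
  refine strictMonoOn_of_deriv_pos (convex_Ioi 0)
    (fun s hs => (hderiv s hs).continuousAt.continuousWithinAt) fun s hs => ?_
  rw [interior_Ioi] at hs
  rw [(hderiv s hs).deriv]
  exact div_pos (mul_pos (mul_pos (hG0 s hs) (hA'' s hs)) (sub_pos.2 (h2A s hs)))
    (pow_pos (hF s hs) 2)

theorem le_mul_of_mul_sqrt_mul_deriv_sub_eq (hA : ∀ s > 0, HasDerivAt A (G s) s)
    (hG : ∀ s > 0, HasDerivAt G (A'' s) s) (hA'' : ∀ s > 0, 0 < A'' s)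
    (hA0 : ∀ s > 0, 0 ≤ A s) (h2A : ∀ s > 0, 2 * A s < s * G s) {τ σ θ : ℝ} (hτ : 0 < τ)
    (hσ : 0 < σ) (hθ : θ ≤ 1) (h : θ * √(τ * G τ - A τ) = √(σ * G σ - A σ)) :
    G σ ≤ θ * G τ := by
  have hF s (hs : 0 < s) : 0 < s * G s - A s := by linarith [hA0 s hs, h2A s hs]
  have hslope s (hs : 0 < s) : G s / √(s * G s - A s) = √(G s ^ 2 / (s * G s - A s)) := by
    have hG0 : 0 ≤ G s := nonneg_of_mul_nonneg_right (by linarith [hA0 s hs, h2A s hs]) hs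
    rw [Real.sqrt_div' _ (hF s hs).le, Real.sqrt_sq hG0]
  refine le_mul_of_strictMonoOn_of_monotoneOn_div (S := Ioi 0) ?_
    (fun s hs => Real.sqrt_pos.2 (hF s hs)) ?_ hτ hσ hθ h
  · exact Real.strictMonoOn_sqrt.comp (strictMonoOn_mul_deriv_sub hA hG hA'')
      fun s hs => (hF s hs).le
  · intro a ha b hb hab
    simp only [hslope a ha, hslope b hb]
    exact Real.sqrt_le_sqrt
      ((strictMonoOn_sq_div_mul_deriv_sub hA hG hA'' hA0 h2A).monotoneOn ha hb hab)

end Legendre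

theorem hasDerivAt_sq_mul_sq {ξ : ℝ → ℝ} {s d : ℝ} (h : HasDerivAt ξ d s) :
    HasDerivAt (fun t => t ^ 2 * ξ t ^ 2) (2 * s * ξ s ^ 2 + 2 * s ^ 2 * ξ s * d) s :=
  ((hasDerivAt_pow 2 s).fun_mul (h.fun_pow 2)).congr_deriv (by ring)

theorem snd_le_chord_of_fst_eq (ξ ξ' A'' r : ℝ → ℝ) (hpos : ∀ t > 0, 0 < ξ t)
    (hderiv : ∀ t > 0, HasDerivAt ξ (ξ' t) t) (hξ'pos : ∀ t > 0, 0 < ξ' t)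
    (hA'' : ∀ t > 0, HasDerivAt (deriv (fun t => t ^ 2 * ξ t ^ 2)) (A'' t) t)
    (hA''pos : ∀ t > 0, 0 < A'' t) (hr : ∀ s, r s = √(ξ s ^ 2 + 2 * s * ξ s * ξ' s))
    {τ σ θ : ℝ} (hτ : 0 < τ) (hσ : 0 ≤ σ) (hθ : θ ∈ Icc (0 : ℝ) 1)
    (h : θ * (τ * r τ) = σ * r σ) :
    σ * (r σ ^ 2 + ξ σ ^ 2) ≤ θ * (τ * (r τ ^ 2 + ξ τ ^ 2)) := by
  set A : ℝ → ℝ := fun t => t ^ 2 * ξ t ^ 2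
  set G : ℝ → ℝ := fun s => 2 * s * ξ s ^ 2 + 2 * s ^ 2 * ξ s * ξ' s
  have hAG s (hs : 0 < s) : HasDerivAt A (G s) s := hasDerivAt_sq_mul_sq (hderiv s hs)
  have hGA'' s (hs : 0 < s) : HasDerivAt G (A'' s) s :=
    (hA'' s hs).congr_of_eventuallyEq <| by
      filter_upwards [Ioi_mem_nhds hs] with u hu using (hAG u hu).deriv.symm
  have hr2 s (hs : 0 < s) : r s ^ 2 = ξ s ^ 2 + 2 * s * ξ s * ξ' s := by
    have := hpos s hs
    have := hξ'pos s hs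
    rw [hr, Real.sq_sqrt (by positivity)]
  have hy s (hs : 0 < s) : s * (r s ^ 2 + ξ s ^ 2) = G s := by
    rw [hr2 s hs]
    ring
  have hx s (hs : 0 < s) : s * r s = √(s * G s - A s) := by
    rw [← Real.sqrt_sq (mul_nonneg hs.le (hr s ▸ Real.sqrt_nonneg _)), mul_pow, hr2 s hs]
    congr 1
    simp only [A, G]
    ring
  have h2A s (hs : 0 < s) : 2 * A s < s * G s := by
    have := mul_pos (pow_pos hs 3) (mul_pos (hpos s hs) (hξ'pos s hs))
    simp only [A, G]
    nlinarith
  rcases hσ.eq_or_lt with rfl | hσ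
  · have := hpos τ hτ
    simpa using mul_nonneg hθ.1 (by positivity : 0 ≤ τ * (r τ ^ 2 + ξ τ ^ 2))
  · rw [hx τ hτ, hx σ hσ] at h
    rw [hy σ hσ, hy τ hτ]
    exact le_mul_of_mul_sqrt_mul_deriv_sub_eq hAG hGA'' hA''pos (fun s _ => by positivity) h2A
      hτ hσ hθ.2 h

theorem statement9_general (ξ ξ' A'' : ℝ → ℝ)
    (hpos : ∀ t > 0, 0 < ξ t)
    (hderiv : ∀ t > 0, HasDerivAt ξ (ξ' t) t)
    (hξ'pos : ∀ t > 0, 0 < ξ' t)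
    (hA'' : ∀ t > 0, HasDerivAt (deriv (fun t => t ^ 2 * ξ t ^ 2)) (A'' t) t)
    (hA''pos : ∀ t > 0, 0 < A'' t)
    (r : ℝ → ℝ) (hr : ∀ s, r s = Real.sqrt (ξ s ^ 2 + 2 * s * ξ s * ξ' s))
    (Γ : ℝ → ℝ → ℝ × ℝ)
    (hΓ : ∀ t τ, Γ t τ = ((τ / t) * r τ, (τ / t) * (r τ ^ 2 + ξ τ ^ 2)))
    (t₁ t₂ : ℝ) (ht₁ : 0 < t₁) (ht₁₂ : t₁ < t₂) :
    ∀ τ > (0 : ℝ),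
      Γ t₂ τ = (t₁ / t₂) • Γ t₁ τ ∧
      (∀ θ ∈ Set.Icc (0 : ℝ) 1, ∀ σ ≥ (0 : ℝ),
        θ * (Γ t₁ τ).1 = (Γ t₁ σ).1 → (Γ t₁ σ).2 ≤ θ * (Γ t₁ τ).2) ∧
      (∀ σ ≥ (0 : ℝ), (Γ t₂ τ).1 = (Γ t₁ σ).1 → (Γ t₁ σ).2 ≤ (Γ t₂ τ).2) := by
  intro τ hτ
  have hscale : Γ t₂ τ = (t₁ / t₂) • Γ t₁ τ := by
    rw [hΓ, hΓ, Prod.smul_mk, smul_eq_mul, smul_eq_mul]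
    congr 1 <;> field_simp
  have hchord (θ : ℝ) (hθ : θ ∈ Icc (0 : ℝ) 1) (σ : ℝ) (hσ : 0 ≤ σ)
      (h : θ * (Γ t₁ τ).1 = (Γ t₁ σ).1) : (Γ t₁ σ).2 ≤ θ * (Γ t₁ τ).2 := by
    simp only [hΓ, div_mul_eq_mul_div, mul_div_assoc'] at h ⊢
    rw [div_le_div_iff_of_pos_right ht₁]
    rw [div_left_inj' ht₁.ne'] at h
    exact snd_le_chord_of_fst_eq ξ ξ' A'' r hpos hderiv hξ'pos hA'' hA''pos hr hτ hσ hθ h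
  refine ⟨hscale, hchord, fun σ hσ h => ?_⟩
  have ht₂ : 0 < t₂ := ht₁.trans ht₁₂
  rw [hscale] at h ⊢
  exact hchord (t₁ / t₂) ⟨by positivity, (div_le_one₀ ht₂).2 ht₁₂.le⟩ σ hσ h

/-- Under the smooth setup, if `0 < t₁ < t₂`, the curve `Γ^{t₁}` lies below
`Γ^{t₂}`: for every `τ > 0`, the point `Γ^{t₂}(τ)` equals `(t₁/t₂)·Γ^{t₁}(τ)`, hence lies on
the segment joining `Γ^{t₁}(τ)` to the origin, and every point of that segment lies on or
above the curve `Γ^{t₁}` (with respect to matching first coordinates); in particular any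
point of `Γ^{t₁}` having the same first coordinate as `Γ^{t₂}(τ)` lies below it. -/
theorem statement9 (ξ ξ' A'' : ℝ → ℝ)
    (hsmooth : ContDiffOn ℝ 2 ξ (Set.Ioi 0))
    (hpos : ∀ t > 0, 0 < ξ t)
    (hξ0 : Filter.Tendsto ξ (nhdsWithin 0 (Set.Ioi 0)) (nhds 0))
    (hderiv : ∀ t > 0, HasDerivAt ξ (ξ' t) t)
    (hξ'pos : ∀ t > 0, 0 < ξ' t)
    (hA'' : ∀ t > 0, HasDerivAt (deriv (fun t => t ^ 2 * ξ t ^ 2)) (A'' t) t)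
    (hA''pos : ∀ t > 0, 0 < A'' t)
    (r : ℝ → ℝ) (hr : ∀ s, r s = Real.sqrt (ξ s ^ 2 + 2 * s * ξ s * ξ' s))
    (Γ : ℝ → ℝ → ℝ × ℝ)
    (hΓ : ∀ t τ, Γ t τ = ((τ / t) * r τ, (τ / t) * (r τ ^ 2 + ξ τ ^ 2)))
    (t₁ t₂ : ℝ) (ht₁ : 0 < t₁) (ht₁₂ : t₁ < t₂) :
    ∀ τ > (0 : ℝ),
      Γ t₂ τ = (t₁ / t₂) • Γ t₁ τ ∧
      (∀ θ ∈ Set.Icc (0 : ℝ) 1, ∀ σ ≥ (0 : ℝ),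
        θ * (Γ t₁ τ).1 = (Γ t₁ σ).1 → (Γ t₁ σ).2 ≤ θ * (Γ t₁ τ).2) ∧
      (∀ σ ≥ (0 : ℝ), (Γ t₂ τ).1 = (Γ t₁ σ).1 → (Γ t₁ σ).2 ≤ (Γ t₂ τ).2) :=
  statement9_general ξ ξ' A'' hpos hderiv hξ'pos hA'' hA''pos r hr Γ hΓ t₁ t₂ ht₁ ht₁₂
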